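/- arXiv:2509.02733 — 3 statements merged into one kernel-verified Lean document; each statement's English description precedes it below -/
import Mathlib

section
/- For α > 0, λ > 0, and t > 0, the derivative with respect to t of E_{α,1}(-λ t^α) equals -λ t^{α-1} E_{α,α}(-λ t^α). -/
/-- The real Mittag-Leffler function `E_{α,β}(x) = ∑ x^n / Γ(αn + β)`. -/
noncomputable def mittagLeffler (α β x : ℝ) : ℝ :=
  ∑' n : ℕ, x ^ n / Real.Gamma (α * n + β)

/-!
Log-convexity of `Γ` gives `Γ(x + α) / Γ(x) → ∞`, so by the ratio test the series
`E_{α,1}(z) = ∑ zⁿ / Γ(αn + 1)` converges everywhere together with its termwise derivative, and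
`n / Γ(αn + 1) = α⁻¹ / Γ(α(n - 1) + α)` identifies that derivative as `α⁻¹ E_{α,α}(z)`.
The chain rule with `d/dt (-λ t^α) = -λ α t^(α-1)` then gives the formula.
-/

open Real Filter Set

namespace Real

theorem mul_Gamma_le_rpow_mul_Gamma_add {a x : ℝ} (ha₀ : 0 < a) (ha₁ : a < 1) (hx : 0 < x) :
    x * Gamma x ≤ (x + a) ^ (1 - a) * Gamma (x + a) := by
  have hxa : 0 < x + a := by linarith
  have hconv := Gamma_mul_add_mul_le_rpow_Gamma_mul_rpow_Gamma hxa (by linarith : 0 < x + a + 1)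
    ha₀ (sub_pos.mpr ha₁) (add_sub_cancel a 1)
  rw [show a * (x + a) + (1 - a) * (x + a + 1) = x + 1 by ring, Gamma_add_one hx.ne',
    Gamma_add_one hxa.ne', mul_rpow hxa.le (Gamma_pos_of_pos hxa).le, ← mul_assoc,
    mul_right_comm, ← rpow_add (Gamma_pos_of_pos hxa), add_sub_cancel, rpow_one] at hconv
  linarith

theorem tendsto_Gamma_add_div_Gamma_atTop {α : ℝ} (hα : 0 < α) :
    Tendsto (fun x => Gamma (x + α) / Gamma x) atTop atTop := by
  -- `Γ` is monotone on `[2, ∞)`, so it suffices to treat a shift `a < 1`.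
  set a := min α (1 / 2)
  have ha₀ : 0 < a := lt_min hα one_half_pos
  have ha₁ : a < 1 := (min_le_right _ _).trans_lt one_half_lt_one
  refine tendsto_atTop_mono' _ ?_ ((tendsto_rpow_atTop ha₀).atTop_div_const two_pos)
  filter_upwards [eventually_ge_atTop 2] with x hx
  have hx₀ : 0 < x := by linarith
  have hxa : 0 < x + a := by linarith
  have hmono : Gamma (x + a) ≤ Gamma (x + α) :=
    Gamma_strictMonoOn_Ici.monotoneOn (by simp; linarith) (by simp; linarith) (by simp [a])
  have hconv := mul_Gamma_le_rpow_mul_Gamma_add ha₀ ha₁ hx₀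
  have hpow : x ^ a * (x + a) ^ (1 - a) ≤ 2 * x :=
    calc x ^ a * (x + a) ^ (1 - a) ≤ (x + a) ^ a * (x + a) ^ (1 - a) := by gcongr; linarith
      _ = x + a := by rw [← rpow_add hxa, add_sub_cancel, rpow_one]
      _ ≤ 2 * x := by linarith
  rw [le_div_iff₀ (Gamma_pos_of_pos hx₀), div_mul_eq_mul_div, div_le_iff₀ two_pos]
  nlinarith [rpow_pos_of_pos hxa (1 - a), rpow_pos_of_pos hx₀ a, Gamma_pos_of_pos hx₀]

end Real

theorem summable_pow_div_Gamma {α : ℝ} (hα : 0 < α) (β x : ℝ) :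
    Summable fun n : ℕ => x ^ n / Gamma (α * n + β) := by
  have hargs : Tendsto (fun n : ℕ => α * n + β) atTop atTop :=
    tendsto_atTop_add_const_right _ _ (tendsto_natCast_atTop_atTop.const_mul_atTop hα)
  refine summable_of_ratio_norm_eventually_le one_half_lt_one ?_
  filter_upwards [hargs.eventually_gt_atTop 0,
    hargs.eventually ((tendsto_Gamma_add_div_Gamma_atTop hα).eventually_ge_atTop (2 * |x|))]
    with n hpos hratio
  have hΓsucc : 0 < Gamma (α * n + β + α) := Gamma_pos_of_pos (by linarith)
  simp only [norm_div, norm_pow, Real.norm_eq_abs, abs_of_pos (Gamma_pos_of_pos hpos),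
    abs_of_pos hΓsucc, Nat.cast_succ, show α * ((n : ℝ) + 1) + β = α * n + β + α by ring]
  rw [div_le_iff₀ hΓsucc]
  calc |x| ^ (n + 1) = 1 / 2 * |x| ^ n * (2 * |x|) := by ring
    _ ≤ 1 / 2 * |x| ^ n * (Gamma (α * n + β + α) / Gamma (α * n + β)) := by gcongr
    _ = 1 / 2 * (|x| ^ n / Gamma (α * n + β)) * Gamma (α * n + β + α) := by ring

theorem succ_mul_pow_div_Gamma {α : ℝ} (hα : 0 < α) (m : ℕ) (x : ℝ) :
    ((m : ℝ) + 1) * x ^ m / Gamma (α * ((m : ℝ) + 1) + 1) =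
      α⁻¹ * (x ^ m / Gamma (α * m + α)) := by
  have hpos : 0 < α * ((m : ℝ) + 1) := by positivity
  rw [Gamma_add_one hpos.ne', show α * ((m : ℝ) + 1) = α * m + α by ring]
  have := (Gamma_pos_of_pos (show 0 < α * m + α by positivity)).ne'
  field_simp

theorem hasDerivAt_mittagLeffler_one {α : ℝ} (hα : 0 < α) (z : ℝ) :
    HasDerivAt (mittagLeffler α 1) (α⁻¹ * mittagLeffler α α z) z := by
  set R := |z| + 1
  have hz : z ∈ Ioo (-R) R := abs_lt.mp (lt_add_one |z|)
  have hshift (x : ℝ) :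
      (fun m : ℕ => ((m + 1 : ℕ) : ℝ) * x ^ (m + 1 - 1) / Gamma (α * (m + 1 : ℕ) + 1)) =
        fun m : ℕ => α⁻¹ * (x ^ m / Gamma (α * m + α)) := by
    ext m
    rw [Nat.add_sub_cancel, Nat.cast_succ, succ_mul_pow_div_Gamma hα]
  have hsummable : Summable fun n : ℕ => n * R ^ (n - 1) / Gamma (α * n + 1) := by
    refine (summable_nat_add_iff 1).mp ?_
    rw [hshift]
    exact (summable_pow_div_Gamma hα α R).mul_left _
  have hbound : ∀ (n : ℕ), ∀ y ∈ Ioo (-R) R,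
      ‖n * y ^ (n - 1) / Gamma (α * n + 1)‖ ≤ n * R ^ (n - 1) / Gamma (α * n + 1) := by
    intro n y hy
    rw [norm_div, norm_mul, norm_pow, Real.norm_eq_abs, Real.norm_eq_abs, Real.norm_eq_abs,
      Nat.abs_cast, abs_of_pos (Gamma_pos_of_pos (by positivity))]
    gcongr
    exact abs_le.mpr ⟨hy.1.le, hy.2.le⟩
  have hderiv := hasDerivAt_tsum_of_isPreconnected hsummable isOpen_Ioo isPreconnected_Ioo
    (fun n y _ => (hasDerivAt_pow n y).div_const (Gamma (α * n + 1))) hbound hz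
    (summable_pow_div_Gamma hα 1 z) hz
  refine (hderiv : HasDerivAt (mittagLeffler α 1) _ z).congr_deriv ?_
  rw [tsum_eq_zero_add', hshift, tsum_mul_left, mittagLeffler]
  · simp
  · rw [hshift]
    exact (summable_pow_div_Gamma hα α z).mul_left _

theorem deriv_mittagLeffler_one_general (α lam t : ℝ) (hα : 0 < α) (ht : 0 < t) :
    HasDerivAt (fun s : ℝ => mittagLeffler α 1 (-lam * s ^ α))
      (-lam * t ^ (α - 1) * mittagLeffler α α (-lam * t ^ α)) t := by
  have hinner : HasDerivAt (fun s : ℝ => -lam * s ^ α) (-lam * (α * t ^ (α - 1))) t :=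
    (hasDerivAt_rpow_const (Or.inl ht.ne')).const_mul _
  refine ((hasDerivAt_mittagLeffler_one hα (-lam * t ^ α)).comp t hinner).congr_deriv ?_
  field_simp

/-- For `α > 0`, `λ > 0`, `t > 0`:
`d/dt [E_{α,1}(-λ t^α)] = -λ t^{α-1} E_{α,α}(-λ t^α)`. -/
theorem deriv_mittagLeffler_one (α lam t : ℝ) (hα : 0 < α) (hlam : 0 < lam) (ht : 0 < t) :
    HasDerivAt (fun s : ℝ => mittagLeffler α 1 (-lam * s ^ α))
      (-lam * t ^ (α - 1) * mittagLeffler α α (-lam * t ^ α)) t :=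
  deriv_mittagLeffler_one_general α lam t hα ht
end

section
/- Let (Ω, Σ, μ) be a measure space with m : Ω → ℝ measurable, m ≥ m₀ > 0 a.e., 1 < α < 2, and u₀ with m^{γ̃} u₀ ∈ L²(μ) for some γ̃ ≥ 0. Assume E_{α,1} is continuous on ℝ, E_{α,1}(0) = 1, and |E_{α,1}(-x)| ≤ C for all x ≥ 0. Then for every 0 ≤ σ ≤ γ̃, ‖m^σ (E_{α,1}(-m(·) t^α) u₀ - u₀)‖_{L²(μ)} → 0 as t → 0⁺. -/
/-! Factor `m^σ (E_{α,1}(-m t^α) - 1) u₀ = [m^{σ-γ̃} (E_{α,1}(-m t^α) - 1)] · m^{γ̃} u₀`. Since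
`m ≥ m₀ > 0` and `σ ≤ γ̃`, the bracket is bounded by `m₀^{σ-γ̃} (C + 1)` uniformly in `t`, and it
tends to `0` pointwise by continuity of `E_{α,1}` at `0`; dominated convergence in `L²` with the
fixed factor `m^{γ̃} u₀ ∈ L²` concludes. -/

open MeasureTheory Filter
open scoped ENNReal Topology

theorem tendsto_eLpNorm_mul_of_bounded_of_tendsto_zero {α R ι : Type*} [MeasurableSpace α]
    {μ : Measure α} [NormedRing R] {l : Filter ι} [l.IsCountablyGenerated] {p : ℝ≥0∞}
    (hp0 : p ≠ 0) (hp : p ≠ ∞) {φ : ι → α → R} {g : α → R} {K : ℝ} (hg : MemLp g p μ)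
    (hφ_meas : ∀ᶠ i in l, AEStronglyMeasurable (φ i) μ)
    (hφ_bound : ∀ᶠ i in l, ∀ᵐ x ∂μ, ‖φ i x‖ ≤ K)
    (hφ_lim : ∀ᵐ x ∂μ, Tendsto (fun i => φ i x) l (𝓝 0)) :
    Tendsto (fun i => eLpNorm (fun x => φ i x * g x) p μ) l (𝓝 0) := by
  have hq : 0 < p.toReal := ENNReal.toReal_pos hp0 hp
  have hKg : MemLp (fun x => K * ‖g x‖) p μ := hg.norm.const_mul K
  have hlim : Tendsto (fun i => ∫⁻ x, ‖φ i x * g x‖ₑ ^ p.toReal ∂μ) l (𝓝 0) := by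
    have := tendsto_lintegral_filter_of_dominated_convergence' (l := l)
      (F := fun i x => ‖φ i x * g x‖ₑ ^ p.toReal) (f := fun _ => 0)
      (fun x => ‖K * ‖g x‖‖ₑ ^ p.toReal) ?_ ?_
      (lintegral_rpow_enorm_lt_top_of_eLpNorm_lt_top hp0 hp hKg.eLpNorm_lt_top).ne ?_
    · simpa using this
    · filter_upwards [hφ_meas] with i hi
      exact ((hi.mul hg.1).enorm).pow_const _
    · filter_upwards [hφ_bound] with i hi
      filter_upwards [hi] with x hx
      gcongr
      rw [enorm_le_iff_norm_le]
      calc ‖φ i x * g x‖ ≤ ‖φ i x‖ * ‖g x‖ := norm_mul_le _ _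
        _ ≤ K * ‖g x‖ := by gcongr
        _ ≤ ‖K * ‖g x‖‖ := Real.le_norm_self _
    · filter_upwards [hφ_lim] with x hx
      have h0 : Tendsto (fun i => φ i x * g x) l (𝓝 0) := by
        simpa using hx.mul_const (g x)
      simpa [hq] using ((continuous_enorm.tendsto 0).comp h0).ennrpow_const p.toReal
  simp_rw [eLpNorm_eq_lintegral_rpow_enorm_toReal hp0 hp]
  simpa [hq] using hlim.ennrpow_const (1 / p.toReal)

theorem tendsto_comp_neg_mul_rpow_nhdsGT_zero {f : ℝ → ℝ} (hf : ContinuousAt f 0) {α : ℝ}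
    (hα : 0 < α) (a : ℝ) : Tendsto (fun t => f (-a * t ^ α)) (𝓝[>] 0) (𝓝 (f 0)) := by
  have hpow : Tendsto (fun t : ℝ => t ^ α) (𝓝[>] 0) (𝓝 0) := by
    simpa [Real.zero_rpow hα.ne'] using
      (Real.continuousAt_rpow_const 0 α (Or.inr hα.le)).tendsto.mono_left nhdsWithin_le_nhds
  exact hf.tendsto.comp (by simpa using hpow.const_mul (-a))

theorem abs_rpow_mul_sub_one_le {f : ℝ → ℝ} {C : ℝ} (hf : ∀ x, 0 ≤ x → |f (-x)| ≤ C)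
    {m₀ y δ s : ℝ} (hm₀ : 0 < m₀) (hy : m₀ ≤ y) (hδ : δ ≤ 0) (hs : 0 ≤ s) :
    |y ^ δ * (f (-s) - 1)| ≤ m₀ ^ δ * (C + 1) := by
  have hf1 : |f (-s) - 1| ≤ C + 1 := (abs_sub _ _).trans (by rw [abs_one]; linarith [hf s hs])
  rw [abs_mul, abs_of_pos (Real.rpow_pos_of_pos (hm₀.trans_le hy) δ)]
  exact mul_le_mul (Real.rpow_le_rpow_of_nonpos hm₀ hy hδ) hf1 (abs_nonneg _)
    (Real.rpow_nonneg hm₀.le δ)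

theorem rpow_mul_mul_sub_eq {y : ℝ} (hy : 0 < y) (σ γ e u : ℝ) :
    y ^ σ * (e * u - u) = y ^ (σ - γ) * (e - 1) * (y ^ γ * u) := by
  have : y ^ γ ≠ 0 := (Real.rpow_pos_of_pos hy γ).ne'
  rw [Real.rpow_sub hy]
  field_simp

theorem initial_condition_S1_general
    {Ω : Type*} [MeasurableSpace Ω] (μ : Measure Ω)
    (m : Ω → ℝ) (hm : Measurable m) (m₀ : ℝ) (hm₀ : 0 < m₀)
    (hlow : ∀ᵐ x ∂μ, m₀ ≤ m x)
    (α : ℝ) (hα1 : 1 < α)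
    (γ' : ℝ)
    (u₀ : Ω → ℝ) (hu₀ : MemLp (fun x => m x ^ γ' * u₀ x) 2 μ)
    (hcont : Continuous (fun x : ℝ => mittagLeffler α 1 x))
    (hone : mittagLeffler α 1 0 = 1)
    (C : ℝ) (hbd : ∀ x : ℝ, 0 ≤ x → |mittagLeffler α 1 (-x)| ≤ C)
    (σ : ℝ) (hσγ : σ ≤ γ') :
    Tendsto
      (fun t : ℝ =>
        (eLpNorm
            (fun x => m x ^ σ * (mittagLeffler α 1 (-(m x) * t ^ α) * u₀ x - u₀ x)) 2
            μ).toReal)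
      (nhdsWithin 0 (Set.Ioi 0)) (nhds 0) := by
  set φ : ℝ → Ω → ℝ := fun t x => m x ^ (σ - γ') * (mittagLeffler α 1 (-(m x) * t ^ α) - 1)
  have hφ_meas (t : ℝ) : AEStronglyMeasurable (φ t) μ := by
    have := hcont.measurable
    exact Measurable.aestronglyMeasurable (by fun_prop)
  have hφ_bound : ∀ᶠ t in 𝓝[>] 0, ∀ᵐ x ∂μ, ‖φ t x‖ ≤ m₀ ^ (σ - γ') * (C + 1) := by
    filter_upwards [self_mem_nhdsWithin] with t (ht : 0 < t)
    filter_upwards [hlow] with x hx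
    simp only [φ, Real.norm_eq_abs, neg_mul]
    exact abs_rpow_mul_sub_one_le hbd hm₀ hx (sub_nonpos.mpr hσγ)
      (mul_nonneg (hm₀.trans_le hx).le (Real.rpow_nonneg ht.le α))
  have hφ_lim : ∀ᵐ x ∂μ, Tendsto (fun t => φ t x) (𝓝[>] 0) (𝓝 0) := by
    refine Eventually.of_forall fun x => ?_
    have := ((tendsto_comp_neg_mul_rpow_nhdsGT_zero hcont.continuousAt
      (by linarith : (0 : ℝ) < α) (m x)).sub_const 1).const_mul (m x ^ (σ - γ'))
    simpa only [hone, sub_self, mul_zero] using this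
  have hfactor (t : ℝ) :
      (fun x => m x ^ σ * (mittagLeffler α 1 (-(m x) * t ^ α) * u₀ x - u₀ x))
        =ᵐ[μ] fun x => φ t x * (m x ^ γ' * u₀ x) := by
    filter_upwards [hlow] with x hx
    exact rpow_mul_mul_sub_eq (hm₀.trans_le hx) _ _ _ _
  simp_rw [eLpNorm_congr_ae (hfactor _)]
  simpa [Function.comp_def] using (ENNReal.tendsto_toReal ENNReal.zero_ne_top).comp
    (tendsto_eLpNorm_mul_of_bounded_of_tendsto_zero two_ne_zero ENNReal.ofNat_ne_top hu₀
      (Eventually.of_forall hφ_meas) hφ_bound hφ_lim)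

/-- Attainment of the initial datum: `‖m^σ (E_{α,1}(-m(·)t^α)u₀ - u₀)‖_{L²} → 0`
as `t → 0⁺`, for `0 ≤ σ ≤ γ̃` when `m^{γ̃} u₀ ∈ L²` and `m ≥ m₀ > 0` a.e. -/
theorem initial_condition_S1
    {Ω : Type*} [MeasurableSpace Ω] (μ : Measure Ω)
    (m : Ω → ℝ) (hm : Measurable m) (m₀ : ℝ) (hm₀ : 0 < m₀)
    (hlow : ∀ᵐ x ∂μ, m₀ ≤ m x)
    (α : ℝ) (hα1 : 1 < α) (hα2 : α < 2)
    (γ' : ℝ) (hγ' : 0 ≤ γ')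
    (u₀ : Ω → ℝ) (hu₀ : MemLp (fun x => m x ^ γ' * u₀ x) 2 μ)
    (hcont : Continuous (fun x : ℝ => mittagLeffler α 1 x))
    (hone : mittagLeffler α 1 0 = 1)
    (C : ℝ) (hC : 0 < C) (hbd : ∀ x : ℝ, 0 ≤ x → |mittagLeffler α 1 (-x)| ≤ C)
    (σ : ℝ) (hσ0 : 0 ≤ σ) (hσγ : σ ≤ γ') :
    Tendsto
      (fun t : ℝ =>
        (eLpNorm
            (fun x => m x ^ σ * (mittagLeffler α 1 (-(m x) * t ^ α) * u₀ x - u₀ x)) 2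
            μ).toReal)
      (nhdsWithin 0 (Set.Ioi 0)) (nhds 0) :=
  initial_condition_S1_general μ m hm m₀ hm₀ hlow α hα1 γ' u₀ hu₀ hcont hone C hbd σ hσγ
end

section
/- Let 1 < α < 2, let m : Ω → ℝ be measurable with m ≥ 0 a.e. on a measure space (Ω, Σ, μ), and assume the estimate |λ t^α E_{α,1}(-λ t^α)| ≤ C' · λt^α/(1+λt^α) for all λ, t ≥ 0 (which follows from |E_{α,1}(-x)| ≤ C/(1+x)). Then for 0 < t < t+h and every u₁ ∈ L²(μ) with m^{1/2} well-defined, the bound ‖m^{1/2}[(t+h)E_{α,2}(-m(·)(t+h)^α) - t E_{α,2}(-m(·) t^α)] u₁‖_{L²(μ)} ≤ (C m₀^{-1/2}/(α-1)) (t^{-(α-1)} - (t+h)^{-(α-1)}) ‖u₁‖_{L²(μ)} holds, where m ≥ m₀ > 0 a.e. -/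
open MeasureTheory

/-! Integrating the power series termwise gives
`u E_{α,2}(-λu^α) - t E_{α,2}(-λt^α) = ∫_t^u E_{α,1}(-λs^α) ds`. Bounding the integrand by
`C/(λ s^α)` and integrating bounds the difference by `C/(λ(α-1)) (t^{1-α} - u^{1-α})`.
After multiplication by `λ^{1/2}` only the factor `λ^{-1/2} ≤ m₀^{-1/2}` depends on `λ`, so
the bound is uniform over `λ = m(x)` and passes to the `L²` norm. -/

open Real Filter Nat

lemma Gamma_mul_natCast_add_pos {α β : ℝ} (hα : 0 ≤ α) (hβ : 0 < β) (n : ℕ) :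
    0 < Gamma (α * n + β) :=
  Gamma_pos_of_pos (by positivity)

lemma factorial_le_Gamma_mul_natCast_add {α β : ℝ} (hα : 1 ≤ α) (hβ : 1 ≤ β) {n : ℕ}
    (hn : 1 ≤ n) :
    (n ! : ℝ) ≤ Gamma (α * n + β) := by
  have hn' : (1 : ℝ) ≤ n := by exact_mod_cast hn
  have hle : (n : ℝ) + 1 ≤ α * n + β := by nlinarith
  rw [← Gamma_nat_eq_factorial]
  exact Gamma_strictMonoOn_Ici.monotoneOn (Set.mem_Ici.2 (by linarith))
    (Set.mem_Ici.2 (by linarith)) hle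

lemma integral_rpow_div_Gamma {r : ℝ} (hr : -1 < r) (a b : ℝ) :
    ∫ x in a..b, x ^ r / Gamma (r + 1) = (b ^ (r + 1) - a ^ (r + 1)) / Gamma (r + 2) := by
  have hr1 : r + 1 ≠ 0 := by linarith
  rw [intervalIntegral.integral_div, integral_rpow (.inl hr),
    show r + 2 = r + 1 + 1 by ring, Gamma_add_one hr1, div_div, mul_comm]

section MittagLeffler

variable {α β C : ℝ}

lemma summable_mittagLeffler (hα : 1 ≤ α) (hβ : 1 ≤ β) (x : ℝ) :
    Summable fun n : ℕ => x ^ n / Gamma (α * n + β) := by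
  refine .of_norm_bounded_eventually_nat (Real.summable_pow_div_factorial |x|) ?_
  filter_upwards [eventually_ge_atTop 1] with n hn
  rw [norm_div, norm_pow, Real.norm_eq_abs,
    Real.norm_of_nonneg (Gamma_mul_natCast_add_pos (by linarith) (by linarith) n).le]
  gcongr
  exact factorial_le_Gamma_mul_natCast_add hα hβ hn

lemma hasSum_mittagLeffler_mul_rpow (hα : 1 ≤ α) (hβ : 1 ≤ β) (c : ℝ) {s : ℝ} (hs : 0 ≤ s) :
    HasSum (fun n : ℕ => c ^ n * s ^ (α * n) / Gamma (α * n + β))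
      (mittagLeffler α β (c * s ^ α)) := by
  have hterm (n : ℕ) : (c * s ^ α) ^ n = c ^ n * s ^ (α * n) := by
    rw [mul_pow, ← rpow_natCast (s ^ α), ← rpow_mul hs]
  simpa only [mittagLeffler, hterm] using (summable_mittagLeffler hα hβ (c * s ^ α)).hasSum

lemma hasSum_mul_mittagLeffler_two_mul_rpow (hα : 1 ≤ α) (c : ℝ) {s : ℝ} (hs : 0 ≤ s) :
    HasSum (fun n : ℕ => c ^ n * s ^ (α * n + 1) / Gamma (α * n + 2))
      (s * mittagLeffler α 2 (c * s ^ α)) := by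
  have hterm (n : ℕ) : c ^ n * s ^ (α * n + 1) / Gamma (α * n + 2) =
      s * (c ^ n * s ^ (α * n) / Gamma (α * n + 2)) := by
    rw [rpow_add_one' hs (by positivity)]
    ring
  simpa only [hterm] using (hasSum_mittagLeffler_mul_rpow hα one_le_two c hs).mul_left s

theorem integral_mittagLeffler_one_mul_rpow (hα : 1 ≤ α) (c : ℝ) {t u : ℝ}
    (ht : 0 ≤ t) (htu : t ≤ u) :
    ∫ s in t..u, mittagLeffler α 1 (c * s ^ α) =
      u * mittagLeffler α 2 (c * u ^ α) - t * mittagLeffler α 2 (c * t ^ α) := by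
  have hα0 : 0 ≤ α := by linarith
  have hΓ (n : ℕ) := Gamma_mul_natCast_add_pos hα0 one_pos n
  have htermwise : HasSum (fun n : ℕ => ∫ s in t..u, c ^ n * s ^ (α * n) / Gamma (α * n + 1))
      (∫ s in t..u, mittagLeffler α 1 (c * s ^ α)) := by
    refine intervalIntegral.hasSum_integral_of_dominated_convergence
      (fun n _ => |c| ^ n * u ^ (α * n) / Gamma (α * n + 1))
      (fun n => (by fun_prop : Measurable _).aestronglyMeasurable)
      (fun n => .of_forall fun s hs => ?_)
      (.of_forall fun _ _ =>
        (hasSum_mittagLeffler_mul_rpow hα le_rfl |c| (ht.trans htu)).summable)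
      intervalIntegrable_const (.of_forall fun s hs => ?_)
    · rw [Set.uIoc_of_le htu] at hs
      have hs0 : 0 ≤ s := ht.trans hs.1.le
      rw [norm_div, norm_mul, norm_pow, Real.norm_eq_abs,
        Real.norm_of_nonneg (rpow_nonneg hs0 _), Real.norm_of_nonneg (hΓ n).le]
      gcongr
      exact hs.2
    · rw [Set.uIoc_of_le htu] at hs
      exact hasSum_mittagLeffler_mul_rpow hα le_rfl c (ht.trans hs.1.le)
  have hterm (n : ℕ) : ∫ s in t..u, c ^ n * s ^ (α * n) / Gamma (α * n + 1) =
      c ^ n * u ^ (α * n + 1) / Gamma (α * n + 2) -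
        c ^ n * t ^ (α * n + 1) / Gamma (α * n + 2) := by
    have hexp : -1 < α * n := by linarith [mul_nonneg hα0 n.cast_nonneg]
    simp only [mul_div_assoc]
    rw [intervalIntegral.integral_const_mul, integral_rpow_div_Gamma hexp]
    ring
  simp only [hterm] at htermwise
  exact htermwise.unique ((hasSum_mul_mittagLeffler_two_mul_rpow hα c (ht.trans htu)).sub
    (hasSum_mul_mittagLeffler_two_mul_rpow hα c ht))

theorem abs_sub_mittagLeffler_two_le (hα : 1 < α)
    (hE : ∀ x : ℝ, 0 < x → |mittagLeffler α 1 (-x)| ≤ C / x) {lam : ℝ} (hlam : 0 < lam)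
    {t u : ℝ} (ht : 0 < t) (htu : t ≤ u) :
    |u * mittagLeffler α 2 (-lam * u ^ α) - t * mittagLeffler α 2 (-lam * t ^ α)| ≤
      C / (lam * (α - 1)) * (t ^ (-(α - 1)) - u ^ (-(α - 1))) := by
  have hu : 0 < u := ht.trans_le htu
  have hpointwise :
      ∀ s ∈ Set.Ioc t u, ‖mittagLeffler α 1 (-lam * s ^ α)‖ ≤ C / lam * s ^ (-α) := by
    intro s hs
    have hs0 : 0 < s := ht.trans hs.1
    rw [Real.norm_eq_abs, neg_mul, rpow_neg hs0.le]
    refine (hE _ (by positivity)).trans_eq ?_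
    ring
  have hzero : (0 : ℝ) ∉ Set.uIcc t u := Set.notMem_uIcc_of_lt ht hu
  have hα_ne : -α ≠ -1 := by intro h; linarith
  calc |u * mittagLeffler α 2 (-lam * u ^ α) - t * mittagLeffler α 2 (-lam * t ^ α)|
      = ‖∫ s in t..u, mittagLeffler α 1 (-lam * s ^ α)‖ := by
        rw [integral_mittagLeffler_one_mul_rpow hα.le _ ht.le htu, Real.norm_eq_abs]
    _ ≤ ∫ s in t..u, C / lam * s ^ (-α) :=
        intervalIntegral.norm_integral_le_of_norm_le htu (.of_forall hpointwise)
          ((intervalIntegral.intervalIntegrable_rpow (.inr hzero)).const_mul _)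
    _ = C / (lam * (α - 1)) * (t ^ (-(α - 1)) - u ^ (-(α - 1))) := by
        rw [intervalIntegral.integral_const_mul, integral_rpow (.inr ⟨hα_ne, hzero⟩),
          show -α + 1 = -(α - 1) by ring]
        have : α - 1 ≠ 0 := by linarith
        field_simp
        ring

theorem rpow_half_mul_abs_sub_mittagLeffler_two_le (hα : 1 < α) (hC : 0 ≤ C)
    (hE : ∀ x : ℝ, 0 < x → |mittagLeffler α 1 (-x)| ≤ C / x) {m₀ lam : ℝ} (hm₀ : 0 < m₀)
    (hlam : m₀ ≤ lam) {t u : ℝ} (ht : 0 < t) (htu : t ≤ u) :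
    lam ^ ((1 : ℝ) / 2) *
        |u * mittagLeffler α 2 (-lam * u ^ α) - t * mittagLeffler α 2 (-lam * t ^ α)| ≤
      C * m₀ ^ (-(1 : ℝ) / 2) / (α - 1) * (t ^ (-(α - 1)) - u ^ (-(α - 1))) := by
  have hlam0 : 0 < lam := hm₀.trans_le hlam
  have hα1 : 0 < α - 1 := by linarith
  have hdecay : 0 ≤ t ^ (-(α - 1)) - u ^ (-(α - 1)) :=
    sub_nonneg.2 (rpow_le_rpow_of_nonpos ht htu (by linarith))
  have hhalf : lam ^ ((1 : ℝ) / 2) / lam = lam ^ (-(1 : ℝ) / 2) := by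
    rw [← rpow_sub_one hlam0.ne']
    norm_num
  calc lam ^ ((1 : ℝ) / 2) *
        |u * mittagLeffler α 2 (-lam * u ^ α) - t * mittagLeffler α 2 (-lam * t ^ α)|
      ≤ lam ^ ((1 : ℝ) / 2) * (C / (lam * (α - 1)) * (t ^ (-(α - 1)) - u ^ (-(α - 1)))) := by
        gcongr
        exact abs_sub_mittagLeffler_two_le hα hE hlam0 ht htu
    _ = C * lam ^ (-(1 : ℝ) / 2) / (α - 1) * (t ^ (-(α - 1)) - u ^ (-(α - 1))) := by
        rw [← hhalf]
        field_simp
    _ ≤ C * m₀ ^ (-(1 : ℝ) / 2) / (α - 1) * (t ^ (-(α - 1)) - u ^ (-(α - 1))) := by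
        gcongr C * ?_ / _ * _
        exact rpow_le_rpow_of_nonpos hm₀ hlam (by norm_num)

end MittagLeffler

theorem S2_continuity_estimate_general
    {Ω : Type*} [MeasurableSpace Ω] (μ : Measure Ω)
    (m : Ω → ℝ) (m₀ : ℝ) (hm₀ : 0 < m₀)
    (hlow : ∀ᵐ x ∂μ, m₀ ≤ m x)
    (α : ℝ) (hα1 : 1 < α)
    (C : ℝ) (hC : 0 < C)
    (hE : ∀ x : ℝ, 0 ≤ x → |mittagLeffler α 1 (-x)| ≤ C / (1 + x))
    (u₁ : Ω → ℝ)
    (t h : ℝ) (ht : 0 < t) (hh : 0 < h) :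
    eLpNorm
        (fun x => m x ^ ((1 : ℝ) / 2) *
          ((t + h) * mittagLeffler α 2 (-(m x) * (t + h) ^ α) -
            t * mittagLeffler α 2 (-(m x) * t ^ α)) * u₁ x) 2 μ ≤
      ENNReal.ofReal
          (C * m₀ ^ (-(1 : ℝ) / 2) / (α - 1) *
            (t ^ (-(α - 1)) - (t + h) ^ (-(α - 1)))) *
        eLpNorm u₁ 2 μ := by
  have hE_inv (x : ℝ) (hx : 0 < x) : |mittagLeffler α 1 (-x)| ≤ C / x :=
    (hE x hx.le).trans (div_le_div_of_nonneg_left hC.le hx (by linarith))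
  refine eLpNorm_le_mul_eLpNorm_of_ae_le_mul ?_ 2
  filter_upwards [hlow] with x hx
  rw [Real.norm_eq_abs, Real.norm_eq_abs, abs_mul, abs_mul,
    abs_of_nonneg (rpow_nonneg (hm₀.le.trans hx) _)]
  exact mul_le_mul_of_nonneg_right
    (rpow_half_mul_abs_sub_mittagLeffler_two_le hα1 hC.le hE_inv hm₀ hx ht (by linarith))
    (abs_nonneg _)

/-- Continuity estimate for `t ↦ t E_{α,2}(-m(·)t^α) u₁` in `V_{1/2}`:
`‖m^{1/2}[(t+h)E_{α,2}(-m(t+h)^α) - t E_{α,2}(-m t^α)]u₁‖_{L²}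
  ≤ (C m₀^{-1/2}/(α-1)) (t^{-(α-1)} - (t+h)^{-(α-1)}) ‖u₁‖_{L²}`. -/
theorem S2_continuity_estimate
    {Ω : Type*} [MeasurableSpace Ω] (μ : Measure Ω)
    (m : Ω → ℝ) (hm : Measurable m) (m₀ : ℝ) (hm₀ : 0 < m₀)
    (hlow : ∀ᵐ x ∂μ, m₀ ≤ m x)
    (α : ℝ) (hα1 : 1 < α) (hα2 : α < 2)
    (C : ℝ) (hC : 0 < C)
    (hE : ∀ x : ℝ, 0 ≤ x → |mittagLeffler α 1 (-x)| ≤ C / (1 + x))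
    (hE' : ∀ lam t : ℝ, 0 ≤ lam → 0 ≤ t →
      |lam * t ^ α * mittagLeffler α 1 (-lam * t ^ α)| ≤
        C * (lam * t ^ α / (1 + lam * t ^ α)))
    (u₁ : Ω → ℝ) (hu₁ : MemLp u₁ 2 μ)
    (t h : ℝ) (ht : 0 < t) (hh : 0 < h) :
    eLpNorm
        (fun x => m x ^ ((1 : ℝ) / 2) *
          ((t + h) * mittagLeffler α 2 (-(m x) * (t + h) ^ α) -
            t * mittagLeffler α 2 (-(m x) * t ^ α)) * u₁ x) 2 μ ≤
      ENNReal.ofReal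
          (C * m₀ ^ (-(1 : ℝ) / 2) / (α - 1) *
            (t ^ (-(α - 1)) - (t + h) ^ (-(α - 1)))) *
        eLpNorm u₁ 2 μ :=
  S2_continuity_estimate_general μ m m₀ hm₀ hlow α hα1 C hC hE u₁ t h ht hh
end
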